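/- arXiv:1005.3616 — 2 statements merged into one kernel-verified Lean document; each statement's English description precedes it below -/
import Mathlib

section
/- The discrete intervals hypergraph on n vertices satisfies cf(H_n) = um(H_n) = ⌊log₂ n⌋ + 1. -/
def IsCFColoring (E : Finset (Finset ℕ)) (C : ℕ → ℕ) : Prop :=
  ∀ e ∈ E, e.Nonempty → ∃ x ∈ e, ∀ y ∈ e, y ≠ x → C y ≠ C x

def IsUMColoring (E : Finset (Finset ℕ)) (C : ℕ → ℕ) : Prop :=
  ∀ e ∈ E, e.Nonempty → ∃ x ∈ e, ∀ y ∈ e, y ≠ x → C y < C x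

/-- The hyperedges of the discrete intervals hypergraph on `{1, …, n}`:
all nonempty intervals of consecutive integers. -/
def intervalEdges (n : ℕ) : Finset (Finset ℕ) :=
  ((Finset.Icc 1 n ×ˢ Finset.Icc 1 n).filter (fun p => p.1 ≤ p.2)).image
    (fun p => Finset.Icc p.1 p.2)

noncomputable def cfNum (n : ℕ) : ℕ :=
  sInf {k | ∃ C : ℕ → ℕ, (∀ v ∈ Finset.Icc 1 n, C v < k) ∧
    IsCFColoring (intervalEdges n) C}

noncomputable def umNum (n : ℕ) : ℕ :=
  sInf {k | ∃ C : ℕ → ℕ, (∀ v ∈ Finset.Icc 1 n, C v < k) ∧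
    IsUMColoring (intervalEdges n) C}

/-!
Colouring `v` by its 2-adic valuation is a unique-maximum colouring with colours at most
`⌊log₂ n⌋`: if `x < y` both have valuation `t`, then `x + 2 ^ t` lies strictly between them
and is divisible by `2 ^ (t + 1)`. Conversely, the uniquely coloured vertex of an interval of
length `2 ^ (k + 1)` leaves on one side an interval of length `2 ^ k` avoiding its colour, so
by induction an interval of length `2 ^ k` sees at least `k + 1` colours in any conflict-free
colouring.
-/

open Finset

lemma Icc_mem_intervalEdges {n a b : ℕ} (ha : 1 ≤ a) (hab : a ≤ b) (hb : b ≤ n) :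
    Icc a b ∈ intervalEdges n := by
  refine mem_image.mpr ⟨(a, b), ?_, rfl⟩
  simp only [mem_filter, mem_product, mem_Icc]
  omega

lemma exists_eq_Icc_of_mem_intervalEdges {n : ℕ} {e : Finset ℕ} (he : e ∈ intervalEdges n) :
    ∃ a b, 1 ≤ a ∧ a ≤ b ∧ b ≤ n ∧ e = Icc a b := by
  obtain ⟨⟨a, b⟩, hp, rfl⟩ := mem_image.mp he
  simp only [mem_filter, mem_product, mem_Icc] at hp
  exact ⟨a, b, hp.1.1.1, hp.2, hp.1.2.2, rfl⟩

lemma IsUMColoring.isCFColoring {E : Finset (Finset ℕ)} {C : ℕ → ℕ} (h : IsUMColoring E C) :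
    IsCFColoring E C := fun e he hne =>
  let ⟨x, hx, hmax⟩ := h e he hne
  ⟨x, hx, fun y hy hyx => (hmax y hy hyx).ne⟩

lemma exists_padicValNat_two_gt_of_lt {x y : ℕ} (hx : x ≠ 0) (hxy : x < y)
    (hval : padicValNat 2 x = padicValNat 2 y) :
    ∃ z, x < z ∧ z < y ∧ padicValNat 2 x < padicValNat 2 z := by
  have hy : y ≠ 0 := by omega
  obtain ⟨a, hxa⟩ : 2 ^ padicValNat 2 x ∣ x := pow_padicValNat_dvd
  obtain ⟨b, hyb⟩ : 2 ^ padicValNat 2 x ∣ y := hval ▸ pow_padicValNat_dvd (n := y)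
  have ha : ¬ 2 ∣ a := fun h2 => pow_succ_padicValNat_not_dvd hx
    (hxa ▸ pow_succ 2 _ ▸ mul_dvd_mul_left _ h2)
  have hb : ¬ 2 ∣ b := fun h2 => pow_succ_padicValNat_not_dvd hy
    (hval ▸ hyb ▸ pow_succ 2 _ ▸ mul_dvd_mul_left _ h2)
  have hab : a + 1 < b := by
    have : 2 ^ padicValNat 2 x * a < 2 ^ padicValNat 2 x * b := by rwa [← hxa, ← hyb]
    have := Nat.lt_of_mul_lt_mul_left this
    omega
  have hpos : 0 < 2 ^ padicValNat 2 x := by positivity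
  refine ⟨2 ^ padicValNat 2 x * (a + 1), by nlinarith, by nlinarith, ?_⟩
  rw [← Nat.succ_le_iff, ← padicValNat_dvd_iff_le (by positivity), pow_succ]
  exact mul_dvd_mul_left _ (by omega)

lemma isUMColoring_padicValNat_two (n : ℕ) :
    IsUMColoring (intervalEdges n) (padicValNat 2) := by
  intro e he hne
  obtain ⟨a, b, ha, -, -, rfl⟩ := exists_eq_Icc_of_mem_intervalEdges he
  obtain ⟨x, hx, hmax⟩ := exists_max_image _ (padicValNat 2) hne
  refine ⟨x, hx, fun y hy hyx => (hmax y hy).lt_of_ne fun hval => ?_⟩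
  rw [mem_Icc] at hx hy
  rcases hyx.lt_or_gt with hyx | hxy
  · obtain ⟨z, hyz, hzx, hlt⟩ := exists_padicValNat_two_gt_of_lt (by omega) hyx hval
    exact (hmax z (mem_Icc.mpr (by omega))).not_gt (hval ▸ hlt)
  · obtain ⟨z, hxz, hzy, hlt⟩ := exists_padicValNat_two_gt_of_lt (by omega) hxy hval.symm
    exact (hmax z (mem_Icc.mpr (by omega))).not_gt hlt

lemma padicValNat_two_le_log {v n : ℕ} (hv : v ∈ Icc 1 n) :
    padicValNat 2 v ≤ Nat.log 2 n := by
  rw [mem_Icc] at hv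
  exact Nat.le_log_of_pow_le one_lt_two
    ((Nat.le_of_dvd (by omega) pow_padicValNat_dvd).trans hv.2)

lemma card_image_lt_card_image_of_forall_ne {α β : Type*} [DecidableEq β] {s t : Finset α}
    {f : α → β} {x : α} (hst : s ⊆ t) (hx : x ∈ t) (hne : ∀ y ∈ s, f y ≠ f x) :
    #(s.image f) < #(t.image f) := by
  refine card_lt_card ((ssubset_iff_of_subset (image_subset_image hst)).mpr
    ⟨f x, mem_image_of_mem f hx, fun h => ?_⟩)
  obtain ⟨y, hy, hfy⟩ := mem_image.mp h
  exact hne y hy hfy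

lemma IsCFColoring.succ_le_card_image_Icc {n : ℕ} {C : ℕ → ℕ}
    (hC : IsCFColoring (intervalEdges n) C) (k : ℕ) :
    ∀ a b, 1 ≤ a → b ≤ n → a + 2 ^ k ≤ b + 1 → k + 1 ≤ #((Icc a b).image C) := by
  induction k with
  | zero =>
    intro a b _ _ hlen
    exact card_pos.mpr ((nonempty_Icc.mpr (by omega)).image C)
  | succ k ih =>
    intro a b ha hb hlen
    have hpow : 2 ^ (k + 1) = 2 ^ k + 2 ^ k := by ring
    have hab : a ≤ b := by have := Nat.one_le_two_pow (n := k); omega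
    obtain ⟨x, hx, huniq⟩ := hC _ (Icc_mem_intervalEdges ha hab hb) (nonempty_Icc.mpr hab)
    rw [mem_Icc] at hx
    obtain ⟨a', b', haa', hb'b, hside, hlen'⟩ :
        ∃ a' b', a ≤ a' ∧ b' ≤ b ∧ (b' < x ∨ x < a') ∧ a' + 2 ^ k ≤ b' + 1 := by
      rcases le_or_gt (a + 2 ^ k) x with h | h
      · exact ⟨a, x - 1, le_rfl, by omega, by omega, by omega⟩
      · exact ⟨x + 1, b, by omega, le_rfl, by omega, by omega⟩
    have hsub := Icc_subset_Icc haa' hb'b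
    have hlt := card_image_lt_card_image_of_forall_ne (f := C) hsub (mem_Icc.mpr hx)
      fun y hy => huniq y (hsub hy) (by rw [mem_Icc] at hy; omega)
    have := ih a' b' (by omega) (by omega) hlen'
    omega

lemma IsCFColoring.log_succ_le {n k : ℕ} {C : ℕ → ℕ} (hn : 1 ≤ n)
    (hC : IsCFColoring (intervalEdges n) C) (hk : ∀ v ∈ Icc 1 n, C v < k) :
    Nat.log 2 n + 1 ≤ k := calc
  Nat.log 2 n + 1 ≤ #((Icc 1 n).image C) := by
    have := Nat.pow_log_le_self 2 (x := n) (by omega)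
    exact hC.succ_le_card_image_Icc _ 1 n le_rfl le_rfl (by omega)
  _ ≤ #(range k) := card_le_card fun c hc =>
    let ⟨v, hv, hcv⟩ := mem_image.mp hc; mem_range.mpr (hcv ▸ hk v hv)
  _ = k := card_range k

/-- The discrete intervals hypergraph on `n` vertices satisfies
`cf(H_n) = um(H_n) = ⌊log₂ n⌋ + 1`. -/
theorem cf_um_discrete_intervals (n : ℕ) (hn : 1 ≤ n) :
    cfNum n = Nat.log 2 n + 1 ∧ umNum n = Nat.log 2 n + 1 := by
  have hbound : ∀ v ∈ Icc 1 n, padicValNat 2 v < Nat.log 2 n + 1 :=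
    fun v hv => Nat.lt_succ_of_le (padicValNat_two_le_log hv)
  have hum := isUMColoring_padicValNat_two n
  exact ⟨IsLeast.csInf_eq ⟨⟨_, hbound, hum.isCFColoring⟩,
      fun _ ⟨_, hk, hC⟩ => hC.log_succ_le hn hk⟩,
    IsLeast.csInf_eq ⟨⟨_, hbound, hum⟩,
      fun _ ⟨_, hk, hC⟩ => hC.isCFColoring.log_succ_le hn hk⟩⟩
end

section
/- Any conflict-free coloring of the discrete intervals hypergraph on n ≥ 2^k vertices uses at least k+1 colors. -/
lemma mem_intervalEdges (n a b : ℕ) (ha : 1 ≤ a) (hb : b ≤ n) (hab : a ≤ b) :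
    Finset.Icc a b ∈ intervalEdges n := by
  unfold intervalEdges
  rw [Finset.mem_image]
  refine ⟨(a, b), ?_, rfl⟩
  simp only [Finset.mem_filter, Finset.mem_product, Finset.mem_Icc]
  omega

lemma cf_aux (n : ℕ) (C : ℕ → ℕ) (hC : IsCFColoring (intervalEdges n) C) :
    ∀ k a b, 1 ≤ a → b ≤ n → 2 ^ k ≤ b + 1 - a →
      k + 1 ≤ ((Finset.Icc a b).image C).card := by
  intro k
  induction k with
  | zero =>
    intro a b ha hb hs
    have hab : a ≤ b := by simp at hs; omega
    have : C a ∈ (Finset.Icc a b).image C :=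
      Finset.mem_image_of_mem C (Finset.mem_Icc.mpr ⟨le_refl a, hab⟩)
    have := Finset.card_pos.mpr ⟨C a, this⟩
    omega
  | succ k ih =>
    intro a b ha hb hs
    have hpow : 2 ^ (k + 1) = 2 ^ k + 2 ^ k := by ring
    have hpos : 1 ≤ 2 ^ k := Nat.one_le_two_pow
    have hab : a ≤ b := by omega
    obtain ⟨x, hx, hux⟩ := hC (Finset.Icc a b) (mem_intervalEdges n a b ha hb hab)
      ⟨a, Finset.mem_Icc.mpr ⟨le_refl a, hab⟩⟩
    rw [Finset.mem_Icc] at hx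
    by_cases hcase : 2 ^ k ≤ x - a
    · -- use left interval [a, x-1]
      have hkey := ih a (x - 1) ha (by omega) (by omega)
      have hnot : C x ∉ (Finset.Icc a (x - 1)).image C := by
        rw [Finset.mem_image]
        rintro ⟨y, hy, hyc⟩
        rw [Finset.mem_Icc] at hy
        exact hux y (Finset.mem_Icc.mpr ⟨hy.1, by omega⟩) (by omega) hyc
      have hsub : insert (C x) ((Finset.Icc a (x - 1)).image C)
          ⊆ (Finset.Icc a b).image C := by
        intro c hc
        rcases Finset.mem_insert.mp hc with h | h
        · exact h ▸ Finset.mem_image_of_mem C (Finset.mem_Icc.mpr ⟨hx.1, hx.2⟩)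
        · rw [Finset.mem_image] at h ⊢
          obtain ⟨y, hy, hyc⟩ := h
          rw [Finset.mem_Icc] at hy
          exact ⟨y, Finset.mem_Icc.mpr ⟨hy.1, by omega⟩, hyc⟩
      have := Finset.card_le_card hsub
      rw [Finset.card_insert_of_notMem hnot] at this
      omega
    · -- use right interval [x+1, b]
      have hkey := ih (x + 1) b (by omega) hb (by omega)
      have hnot : C x ∉ (Finset.Icc (x + 1) b).image C := by
        rw [Finset.mem_image]
        rintro ⟨y, hy, hyc⟩
        rw [Finset.mem_Icc] at hy
        exact hux y (Finset.mem_Icc.mpr ⟨by omega, hy.2⟩) (by omega) hyc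
      have hsub : insert (C x) ((Finset.Icc (x + 1) b).image C)
          ⊆ (Finset.Icc a b).image C := by
        intro c hc
        rcases Finset.mem_insert.mp hc with h | h
        · exact h ▸ Finset.mem_image_of_mem C (Finset.mem_Icc.mpr ⟨hx.1, hx.2⟩)
        · rw [Finset.mem_image] at h ⊢
          obtain ⟨y, hy, hyc⟩ := h
          rw [Finset.mem_Icc] at hy
          exact ⟨y, Finset.mem_Icc.mpr ⟨by omega, hy.2⟩, hyc⟩
      have := Finset.card_le_card hsub
      rw [Finset.card_insert_of_notMem hnot] at this
      omega

/-- Any conflict-free coloring of the discrete intervals hypergraph on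
`n ≥ 2^k` vertices uses at least `k + 1` colors. -/
theorem cf_lower_bound (n k : ℕ) (hn : 2 ^ k ≤ n) (C : ℕ → ℕ)
    (hC : IsCFColoring (intervalEdges n) C) :
    k + 1 ≤ ((Finset.Icc 1 n).image C).card := by
  exact cf_aux n C hC k 1 n le_rfl le_rfl (by omega)
end
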